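/- The probabilistic function f : ℕ → 𝒫(ℕ) defined by f(x)(y) = 1/2^{y−x+1} if y ≥ x and f(x)(y) = 0 otherwise, is probabilistic recursive. -/

import Mathlib

noncomputable section
open scoped Classical

/-- A pseudodistribution on ℕ: pointwise nonnegative, summable, with total mass at most 1. -/
def IsPseudoDist (D : ℕ → ℝ) : Prop :=
  (∀ n, 0 ≤ D n) ∧ Summable D ∧ ∑' n, D n ≤ 1

/-- Generalized composition:
(f ⊙ (g₁,…,gₙ))(x⃗)(y) = ∑_{z⃗} f(z⃗)(y) · ∏ᵢ gᵢ(x⃗)(zᵢ). -/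
noncomputable def genComp {n k : ℕ} (f : (Fin n → ℕ) → ℕ → ℝ)
    (g : Fin n → (Fin k → ℕ) → ℕ → ℝ) : (Fin k → ℕ) → ℕ → ℝ :=
  fun x y => ∑' z : Fin n → ℕ, f z y * ∏ i, g i x (z i)

/-- Auxiliary for primitive recursion: h(x⃗,0) = f(x⃗),
h(x⃗,y+1)(w) = ∑_z g(x⃗,y,z)(w) · h(x⃗,y)(z). -/
noncomputable def primRecAux {k : ℕ} (f : (Fin k → ℕ) → ℕ → ℝ)
    (g : (Fin (k + 2) → ℕ) → ℕ → ℝ) (x : Fin k → ℕ) : ℕ → ℕ → ℝ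
  | 0 => f x
  | y + 1 => fun w =>
      ∑' z : ℕ, g (Fin.snoc (Fin.snoc x y) z) w * primRecAux f g x y z

/-- Primitive recursion of probabilistic functions, as a function on ℕ^(k+1). -/
noncomputable def primRec {k : ℕ} (f : (Fin k → ℕ) → ℕ → ℝ)
    (g : (Fin (k + 2) → ℕ) → ℕ → ℝ) : (Fin (k + 1) → ℕ) → ℕ → ℝ :=
  fun v => primRecAux f g (Fin.init v) (v (Fin.last k))

/-- Minimization: (μf)(x⃗)(y) = f(x⃗,y)(0) · ∏_{z<y} (∑_{k>0} f(x⃗,z)(k)). -/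
noncomputable def minimize {k : ℕ} (f : (Fin (k + 1) → ℕ) → ℕ → ℝ) :
    (Fin k → ℕ) → ℕ → ℝ :=
  fun x y =>
    f (Fin.snoc x y) 0 *
      ∏ z ∈ Finset.range y, ∑' m : {m : ℕ // 0 < m}, f (Fin.snoc x z) (m : ℕ)

/-- The class PR of probabilistic recursive functions: the smallest class of
probabilistic functions containing the basic probabilistic functions (zero,
successor, projections, fair coin) and closed under generalized composition,
primitive recursion and minimization. -/
inductive PR : {k : ℕ} → ((Fin k → ℕ) → ℕ → ℝ) → Prop where
  /-- The zero function z(n) = Dirac(0). -/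
  | zero : PR (fun (_ : Fin 1 → ℕ) (y : ℕ) => if y = 0 then (1 : ℝ) else 0)
  /-- The successor function s(n) = Dirac(n+1). -/
  | succ : PR (fun (x : Fin 1 → ℕ) (y : ℕ) => if y = x 0 + 1 then (1 : ℝ) else 0)
  /-- The projections Πⁿₘ(x⃗) = Dirac(xₘ). -/
  | proj {n : ℕ} (m : Fin n) :
      PR (fun (x : Fin n → ℕ) (y : ℕ) => if y = x m then (1 : ℝ) else 0)
  /-- The fair coin r(x), assigning probability 1/2 to each of x and x+1. -/
  | coin : PR (fun (x : Fin 1 → ℕ) (y : ℕ) =>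
      if y = x 0 ∨ y = x 0 + 1 then (1 : ℝ) / 2 else 0)
  /-- Closure under generalized composition. -/
  | comp {n k : ℕ} {f : (Fin n → ℕ) → ℕ → ℝ} {g : Fin n → (Fin k → ℕ) → ℕ → ℝ} :
      PR f → (∀ i, PR (g i)) → PR (genComp f g)
  /-- Closure under primitive recursion. -/
  | primrec {k : ℕ} {f : (Fin k → ℕ) → ℕ → ℝ} {g : (Fin (k + 2) → ℕ) → ℕ → ℝ} :
      PR f → PR g → PR (primRec f g)
  /-- Closure under minimization. -/
  | minim {k : ℕ} {f : (Fin (k + 1) → ℕ) → ℕ → ℝ} :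
      PR f → PR (minimize f)

/-!
The distribution is that of `x + G`, where `G` is geometric with `P(G = n) = 1/2^(n+1)`.
Minimizing a fair coin on `{0, 1}` yields `G`: the search stops at each step with probability
`1/2`. Primitive recursion whose base case is `G` and whose step is the successor then adds `x`.
-/

theorem genComp_dirac {n k : ℕ} (f : (Fin n → ℕ) → ℕ → ℝ) (φ : Fin n → (Fin k → ℕ) → ℕ) :
    genComp f (fun i x y => if y = φ i x then 1 else 0) = fun x => f fun i => φ i x := by
  funext x y
  unfold genComp
  rw [tsum_eq_single (fun i => φ i x) ?off]
  · simp
  case off =>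
    intro z hz
    obtain ⟨i, hi⟩ := Function.ne_iff.mp hz
    rw [Finset.prod_eq_zero (Finset.mem_univ i) (if_neg hi), mul_zero]

theorem PR.comp_dirac {n k : ℕ} {f : (Fin n → ℕ) → ℕ → ℝ} {φ : Fin n → (Fin k → ℕ) → ℕ}
    (hf : PR f) (hφ : ∀ i, PR fun x y => if y = φ i x then (1 : ℝ) else 0) :
    PR fun x => f fun i => φ i x :=
  genComp_dirac f φ ▸ PR.comp hf hφ

theorem PR.const_zero {k : ℕ} :
    PR fun (_ : Fin (k + 1) → ℕ) (y : ℕ) => if y = 0 then (1 : ℝ) else 0 :=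
  PR.comp_dirac (φ := fun _ x => x 0) PR.zero fun _ => PR.proj 0

theorem minimize_const {k : ℕ} (D : ℕ → ℝ) :
    minimize (fun (_ : Fin (k + 1) → ℕ) => D) =
      fun _ y => D 0 * (∑' m : {m : ℕ // 0 < m}, D m) ^ y := by
  funext x y
  simp [minimize, Finset.prod_const]

theorem PR.geometric {k : ℕ} : PR fun (_ : Fin k → ℕ) (n : ℕ) => (1 : ℝ) / 2 ^ (n + 1) := by
  have hcoin :=
    PR.minim (PR.comp_dirac (k := k + 1) (φ := fun _ _ => 0) PR.coin fun _ => PR.const_zero)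
  have htail : ∑' m : {m : ℕ // 0 < m}, (if (m : ℕ) = 0 ∨ (m : ℕ) = 0 + 1 then (1 : ℝ) / 2 else 0)
      = 1 / 2 := by
    rw [tsum_eq_single ⟨1, one_pos⟩ ?off]
    · simp
    case off =>
      rintro ⟨m, hm⟩ hne
      have : m ≠ 1 := fun h => hne (Subtype.ext h)
      simp [this, hm.ne']
  simp only [minimize_const, htail] at hcoin
  convert hcoin using 3 with _ n
  simp [pow_succ]

theorem primRecAux_succ_last {k : ℕ} (f : (Fin k → ℕ) → ℕ → ℝ) (x : Fin k → ℕ) (y w : ℕ) :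
    primRecAux f (fun v w => if w = v (Fin.last (k + 1)) + 1 then 1 else 0) x y w
      = if y ≤ w then f x (w - y) else 0 := by
  induction y generalizing w with
  | zero => simp [primRecAux]
  | succ y ih =>
    simp only [primRecAux, Fin.snoc_last]
    rcases w with _ | w
    · simp
    · rw [tsum_eq_single w (fun z hz => by simp [Ne.symm hz]), ih]
      simp [Nat.add_sub_add_right]

/-- the probabilistic function f(x)(y) = 1/2^(y−x+1) for y ≥ x
(and 0 otherwise) is probabilistic recursive. -/
theorem shifted_geometric_mem_PR :
    PR (fun (x : Fin 1 → ℕ) (y : ℕ) =>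
      if x 0 ≤ y then (1 : ℝ) / 2 ^ (y - x 0 + 1) else 0) := by
  have hsucc :
      PR fun (v : Fin 2 → ℕ) (w : ℕ) => if w = v (Fin.last 1) + 1 then (1 : ℝ) else 0 :=
    PR.comp_dirac (φ := fun _ v => v (Fin.last 1)) PR.succ fun _ => PR.proj _
  convert PR.primrec (PR.geometric (k := 0)) hsucc using 1
  funext x y
  simp only [primRec, primRecAux_succ_last]
  rfl
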